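/- arXiv:1505.07763 — 2 statements merged into one kernel-verified Lean document; each statement's English description precedes it below -/
import Mathlib

section
/- Let f : ℝⁿ → ℝ be a nonzero smooth function with compact support and let p > 1. Define C_f*(x) = ∫_{S^{n-1}} ‖∇_ξ f‖_p^{-(n+p)} |⟨x, ξ⟩|^p dξ, where ∇_ξ f(y) = ⟨∇f(y), ξ⟩ and ‖∇_ξ f‖_p = (∫_{ℝⁿ} |∇_ξ f(y)|^p dy)^{1/p}. Then C_f* is strictly convex on ℝⁿ. -/
open MeasureTheory Real
open scoped RealInnerProductSpace

noncomputable section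

open scoped Pointwise
open Set

abbrev Ee (n : ℕ) := EuclideanSpace ℝ (Fin n)

variable {n : ℕ} {p : ℝ}


lemma inner_gradient_eq (f : Ee n → ℝ) (y ξ : Ee n) :
    ⟪gradient f y, ξ⟫ = fderiv ℝ f y ξ := by
  simp [gradient, InnerProductSpace.toDual_symm_apply]

lemma gradient_continuous {f : Ee n → ℝ} (hf : ContDiff ℝ (⊤ : ℕ∞) f) :
    Continuous (gradient f) := by
  have h1 : Continuous (fderiv ℝ f) := hf.continuous_fderiv (by simp)
  exact (InnerProductSpace.toDual ℝ (Ee n)).symm.continuous.comp h1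

lemma gradient_compactSupport {f : Ee n → ℝ} (hsupp : HasCompactSupport f) :
    HasCompactSupport (gradient f) := by
  have h : HasCompactSupport (fderiv ℝ f) := hsupp.fderiv (𝕜 := ℝ)
  have he : gradient f = (fun L : (Ee n) →L[ℝ] ℝ => (InnerProductSpace.toDual ℝ (Ee n)).symm L)
      ∘ (fderiv ℝ f) := rfl
  rw [he]
  exact h.comp_left (by simp)
lemma exists_dirDeriv_ne_zero {f : Ee n → ℝ} (hf : ContDiff ℝ (⊤ : ℕ∞) f)
    (hsupp : HasCompactSupport f) (hne : f ≠ 0) {ξ : Ee n} (hξ : ξ ≠ 0) :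
    ∃ y, fderiv ℝ f y ξ ≠ 0 := by
  by_contra hcon
  push_neg at hcon
  apply hne
  funext y
  have hdiff := hf.differentiable (by simp)
  set g : ℝ → ℝ := fun t => f (y + t • ξ) with hg
  have hgd : ∀ t : ℝ, HasDerivAt g (fderiv ℝ f (y + t • ξ) ξ) t := by
    intro t
    have hc : HasDerivAt (fun t : ℝ => y + t • ξ) ξ t := by
      simpa using ((hasDerivAt_id t).smul_const ξ).const_add y
    exact (hdiff (y + t • ξ)).hasFDerivAt.comp_hasDerivAt t hc
  have hgdiff : Differentiable ℝ g := fun t => (hgd t).differentiableAt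
  have hderiv0 : ∀ t, deriv g t = 0 := fun t => by
    rw [(hgd t).deriv]; exact hcon _
  obtain ⟨R, hR⟩ := hsupp.isBounded.subset_closedBall 0
  set T : ℝ := (|R| + ‖y‖ + 1) / ‖ξ‖ with hT
  have hξpos : 0 < ‖ξ‖ := norm_pos_iff.2 hξ
  have hTpos : 0 < T := by positivity
  have hout : y + T • ξ ∉ tsupport f := by
    intro hmem
    have h0 := hR hmem
    rw [Metric.mem_closedBall, dist_zero_right] at h0
    have h1 : ‖T • ξ‖ - ‖y‖ ≤ ‖y + T • ξ‖ := by
      have h := norm_le_norm_add_norm_sub' (T • ξ) (y + T • ξ)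
      have h' : ‖T • ξ - (y + T • ξ)‖ = ‖y‖ := by
        rw [show T • ξ - (y + T • ξ) = -y by abel, norm_neg]
      linarith [h, h'.le, h'.ge]
    have h2 : ‖T • ξ‖ = |R| + ‖y‖ + 1 := by
      rw [norm_smul, Real.norm_eq_abs, abs_of_pos hTpos, hT]
      field_simp
    have h3 : R ≤ |R| := le_abs_self R
    nlinarith
  have hzero : f (y + T • ξ) = 0 := image_eq_zero_of_notMem_tsupport hout
  have hconst : g 0 = g T := is_const_of_deriv_eq_zero hgdiff hderiv0 0 T
  simp only [hg] at hconst
  simpa [hzero] using hconst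
lemma integrand_continuous {f : Ee n → ℝ} (hf : ContDiff ℝ (⊤ : ℕ∞) f) (hp : 1 < p) (ξ : Ee n) :
    Continuous fun y : Ee n => |⟪gradient f y, ξ⟫| ^ p := by
  have h1 : Continuous (gradient f) :=
    ((InnerProductSpace.toDual ℝ (Ee n)).symm.continuous.comp (hf.continuous_fderiv (by simp)))
  exact ((Continuous.inner h1 continuous_const).abs).rpow_const fun y => Or.inr (by positivity)

lemma integrand_integrable {f : Ee n → ℝ} (hf : ContDiff ℝ (⊤ : ℕ∞) f)
    (hsupp : HasCompactSupport f) (hp : 1 < p) (ξ : Ee n) :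
    Integrable (fun y : Ee n => |⟪gradient f y, ξ⟫| ^ p) := by
  apply (integrand_continuous hf hp ξ).integrable_of_hasCompactSupport
  have hg : HasCompactSupport (gradient f) := by
    have h : HasCompactSupport (fderiv ℝ f) := hsupp.fderiv (𝕜 := ℝ)
    exact h.comp_left (g := fun L : (Ee n) →L[ℝ] ℝ =>
      (InnerProductSpace.toDual ℝ (Ee n)).symm L) (by simp)
  apply HasCompactSupport.intro hg
  intro y hy
  have : gradient f y = 0 := image_eq_zero_of_notMem_tsupport hy
  rw [this]
  simp [Real.zero_rpow (by positivity : p ≠ 0)]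

lemma integral_pos_of_ne {f : Ee n → ℝ} (hf : ContDiff ℝ (⊤ : ℕ∞) f)
    (hsupp : HasCompactSupport f) (hne : f ≠ 0) (hp : 1 < p) {ξ : Ee n} (hξ : ξ ≠ 0) :
    0 < ∫ y, |⟪gradient f y, ξ⟫| ^ p := by
  rw [integral_pos_iff_support_of_nonneg (fun y => by positivity)
    (integrand_integrable hf hsupp hp ξ)]
  obtain ⟨y₀, hy₀⟩ := exists_dirDeriv_ne_zero hf hsupp hne hξ
  have hy₀' : ⟪gradient f y₀, ξ⟫ ≠ 0 := by
    rw [inner_gradient_eq]; exact hy₀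
  have hopen : IsOpen (Function.support fun y : Ee n => |⟪gradient f y, ξ⟫| ^ p) := by
    have : Function.support (fun y : Ee n => |⟪gradient f y, ξ⟫| ^ p)
        = (fun y : Ee n => |⟪gradient f y, ξ⟫|) ⁻¹' {0}ᶜ := by
      ext y
      simp only [Function.mem_support, Set.mem_preimage, Set.mem_compl_iff,
        Set.mem_singleton_iff]
      constructor
      · intro h h0
        exact h (by rw [h0]; exact Real.zero_rpow (by positivity))
      · intro h h0
        exact h (by
          have := Real.rpow_natCast
          nlinarith [Real.rpow_pos_of_pos (lt_of_le_of_ne (abs_nonneg _) (Ne.symm h)) p, h0])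
    rw [this]
    exact isOpen_compl_singleton.preimage
      (Continuous.abs (Continuous.inner (((InnerProductSpace.toDual ℝ
        (Ee n)).symm.continuous.comp (hf.continuous_fderiv (by simp)))) continuous_const))
  apply hopen.measure_pos volume
  exact ⟨y₀, by
    simp only [Function.mem_support]
    intro h
    have hpos : 0 < |⟪gradient f y₀, ξ⟫| := abs_pos.2 hy₀'
    exact absurd h (ne_of_gt (Real.rpow_pos_of_pos hpos p))⟩


lemma I_continuousAt {f : Ee n → ℝ} (hf : ContDiff ℝ (⊤ : ℕ∞) f)
    (hsupp : HasCompactSupport f) (hp : 1 < p) (ξ₀ : Ee n) :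
    ContinuousAt (fun ξ : Ee n => ∫ y, |⟪gradient f y, ξ⟫| ^ p) ξ₀ := by
  have hgc : Continuous (gradient f) :=
    ((InnerProductSpace.toDual ℝ (Ee n)).symm.continuous.comp (hf.continuous_fderiv (by simp)))
  have hgK : HasCompactSupport (gradient f) :=
    (hsupp.fderiv (𝕜 := ℝ)).comp_left (g := fun L : (Ee n) →L[ℝ] ℝ =>
      (InnerProductSpace.toDual ℝ (Ee n)).symm L) (by simp)
  set K := tsupport (gradient f) with hK
  have hKc : IsCompact K := hgK
  obtain ⟨M, hM⟩ := hKc.exists_bound_of_continuousOn hgc.continuousOn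
  set M' : ℝ := max M 0 with hM'
  have hM'0 : 0 ≤ M' := le_max_right _ _
  set C : ℝ := (M' * (‖ξ₀‖ + 1)) ^ p with hC
  apply continuousAt_of_dominated (bound := K.indicator fun _ => C)
  · filter_upwards with ξ
    exact (((Continuous.inner hgc continuous_const).abs).rpow_const
      fun y => Or.inr (by positivity)).aestronglyMeasurable
  · filter_upwards [Metric.ball_mem_nhds ξ₀ one_pos] with ξ hξ
    filter_upwards with y
    have hξn : ‖ξ‖ ≤ ‖ξ₀‖ + 1 := by
      have := dist_le_norm_add_norm ξ ξ₀
      have h1 : dist ξ ξ₀ < 1 := Metric.mem_ball.1 hξ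
      calc ‖ξ‖ ≤ ‖ξ₀‖ + dist ξ ξ₀ := by
            rw [dist_eq_norm]
            linarith [norm_sub_norm_le ξ ξ₀, abs_nonneg (0:ℝ)]
        _ ≤ ‖ξ₀‖ + 1 := by linarith
    by_cases hy : y ∈ K
    · rw [Set.indicator_of_mem hy]
      rw [Real.norm_eq_abs, abs_of_nonneg (by positivity)]
      apply Real.rpow_le_rpow (abs_nonneg _) _ (by positivity)
      calc |⟪gradient f y, ξ⟫| ≤ ‖gradient f y‖ * ‖ξ‖ := abs_real_inner_le_norm _ _
        _ ≤ M' * (‖ξ₀‖ + 1) := by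
            apply mul_le_mul ((hM y hy).trans (le_max_left _ _)) hξn (norm_nonneg _) hM'0
    · rw [Set.indicator_of_notMem hy]
      have h0 : gradient f y = 0 := image_eq_zero_of_notMem_tsupport hy
      rw [h0]
      simp [Real.zero_rpow (by positivity : p ≠ 0)]
  · exact (integrableOn_const hKc.measure_lt_top.ne).integrable_indicator
      hKc.measurableSet
  · filter_upwards with y
    exact ((Continuous.inner continuous_const continuous_id).abs.rpow_const
      fun ξ => Or.inr (by positivity)).continuousAt


lemma sphere_hyperplane_null {v : Ee n} (hv : v ≠ 0) :
    (volume : Measure (Ee n)).toSphere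
      {ξ : Metric.sphere (0 : Ee n) 1 | ⟪v, (ξ : Ee n)⟫ = 0} = 0 := by
  set s : Set (Metric.sphere (0 : Ee n) 1) := {ξ | ⟪v, (ξ : Ee n)⟫ = 0} with hs
  have hcont : Continuous fun ξ : Metric.sphere (0 : Ee n) 1 => ⟪v, (ξ : Ee n)⟫ :=
    Continuous.inner continuous_const continuous_subtype_val
  have hms : MeasurableSet s :=
    (isClosed_singleton.preimage hcont).measurableSet
  rw [Measure.toSphere_apply' _ hms]
  have hsub : Ioo (0:ℝ) 1 • (Subtype.val '' s) ⊆ (((ℝ ∙ v)ᗮ : Submodule ℝ (Ee n)) : Set (Ee n)) := by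
    rintro x hx
    obtain ⟨r, hr, z, hz, rfl⟩ := hx
    obtain ⟨ξ, hξ, rfl⟩ := hz
    apply Submodule.smul_mem
    rw [Submodule.mem_orthogonal_singleton_iff_inner_right]
    exact hξ
  have hne : ((ℝ ∙ v)ᗮ : Submodule ℝ (Ee n)) ≠ ⊤ := by
    intro h
    have : v ∈ (ℝ ∙ v)ᗮ := h ▸ Submodule.mem_top
    rw [Submodule.mem_orthogonal_singleton_iff_inner_right] at this
    exact hv (inner_self_eq_zero.1 this)
  have hnull : volume (((ℝ ∙ v)ᗮ : Submodule ℝ (Ee n)) : Set (Ee n)) = 0 :=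
    Measure.addHaar_submodule _ _ hne
  rw [measure_mono_null hsub hnull]
  simp

lemma sphere_univ_pos (hn : 1 ≤ n) :
    0 < (volume : Measure (Ee n)).toSphere Set.univ := by
  rw [Measure.toSphere_apply_univ]
  have h1 : (Module.finrank ℝ (Ee n) : ENNReal) ≠ 0 := by
    simp only [finrank_euclideanSpace, Fintype.card_fin]
    exact_mod_cast Nat.one_le_iff_ne_zero.1 hn
  exact ENNReal.mul_pos h1 (Metric.measure_ball_pos _ _ one_pos).ne'

lemma abs_combo_rpow_le {a b u v : ℝ} (ha : 0 < a) (hb : 0 < b) (hab : a + b = 1)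
    (hp : 1 < p) : |a * u + b * v| ^ p ≤ a * |u| ^ p + b * |v| ^ p := by
  have h1 : |a * u + b * v| ≤ a * |u| + b * |v| := by
    calc |a * u + b * v| ≤ |a * u| + |b * v| := abs_add_le _ _
      _ = a * |u| + b * |v| := by rw [abs_mul, abs_mul, abs_of_pos ha, abs_of_pos hb]
  have hp0 : (0:ℝ) ≤ p := by linarith
  have h2 := Real.rpow_le_rpow (abs_nonneg _) h1 hp0
  have h3 := (convexOn_rpow (le_of_lt hp)).2 (abs_nonneg u) (abs_nonneg v) ha.le hb.le hab
  simp only [smul_eq_mul] at h3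
  linarith

lemma abs_combo_rpow_lt {a b u v : ℝ} (ha : 0 < a) (hb : 0 < b) (hab : a + b = 1)
    (hp : 1 < p) (huv : u ≠ v) : |a * u + b * v| ^ p < a * |u| ^ p + b * |v| ^ p := by
  rcases eq_or_ne |u| |v| with h | h
  · -- then u = -v and v ≠ 0
    have hv0 : v ≠ 0 := by
      rintro rfl
      simp only [abs_zero, abs_eq_zero] at h
      exact huv h
    have hu : u = -v := by
      rcases abs_eq_abs.1 h with h' | h'
      · exact absurd h' huv
      · exact h'
    have hlt : |a * u + b * v| < |v| := by
      rw [hu]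
      have : a * -v + b * v = (b - a) * v := by ring
      rw [this, abs_mul]
      have hba : |b - a| < 1 := by
        rw [abs_lt]; constructor <;> linarith
      calc |b - a| * |v| < 1 * |v| :=
            mul_lt_mul_of_pos_right hba (abs_pos.2 hv0)
        _ = |v| := one_mul _
    have := Real.rpow_lt_rpow (abs_nonneg _) hlt (by linarith : (0:ℝ) < p)
    have hrhs : a * |u| ^ p + b * |v| ^ p = |v| ^ p := by
      rw [h, ← add_mul, hab, one_mul]
    linarith
  · have h1 : |a * u + b * v| ≤ a * |u| + b * |v| := by
      calc |a * u + b * v| ≤ |a * u| + |b * v| := abs_add_le _ _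
        _ = a * |u| + b * |v| := by rw [abs_mul, abs_mul, abs_of_pos ha, abs_of_pos hb]
    have hp0 : (0:ℝ) ≤ p := by linarith
    have h2 := Real.rpow_le_rpow (abs_nonneg _) h1 hp0
    have h3 := (strictConvexOn_rpow hp).2 (abs_nonneg u) (abs_nonneg v) h ha hb hab
    simp only [smul_eq_mul] at h3
    linarith

/-- The `L^p` norm of the directional derivative `∇_ξ f = ⟨∇f, ξ⟩`. -/
def dirDerivLpNorm (n : ℕ) (p : ℝ) (f : EuclideanSpace ℝ (Fin n) → ℝ)
    (ξ : EuclideanSpace ℝ (Fin n)) : ℝ :=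
  (∫ y, |⟪gradient f y, ξ⟫| ^ p) ^ (1 / p)


/-- For a nonzero smooth compactly supported `f` and `p > 1`, the function
`C_f*(x) = ∫_{S^{n-1}} ‖∇_ξ f‖_p^{-(n+p)} |⟨x, ξ⟩|^p dξ` is strictly convex. -/
theorem Cfstar_strictConvex (n : ℕ) (hn : 1 ≤ n) (p : ℝ) (hp : 1 < p)
    (f : EuclideanSpace ℝ (Fin n) → ℝ) (hf : ContDiff ℝ (⊤ : ℕ∞) f)
    (hsupp : HasCompactSupport f) (hne : f ≠ 0) :
    StrictConvexOn ℝ Set.univ (fun x : EuclideanSpace ℝ (Fin n) =>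
      ∫ ξ : Metric.sphere (0 : EuclideanSpace ℝ (Fin n)) 1,
        dirDerivLpNorm n p f ξ ^ (-(n + p : ℝ)) * |⟪x, (ξ : EuclideanSpace ℝ (Fin n))⟫| ^ p
          ∂(volume : Measure (EuclideanSpace ℝ (Fin n))).toSphere) := by
  classical
  set μ := (volume : Measure (EuclideanSpace ℝ (Fin n))).toSphere with hμ
  set c : Metric.sphere (0 : Ee n) 1 → ℝ :=
    fun ξ => dirDerivLpNorm n p f ξ ^ (-(n + p : ℝ)) with hc
  set Φ : Ee n → Metric.sphere (0 : Ee n) 1 → ℝ :=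
    fun x ξ => c ξ * |⟪x, (ξ : Ee n)⟫| ^ p with hΦ
  have hξne : ∀ ξ : Metric.sphere (0 : Ee n) 1, (ξ : Ee n) ≠ 0 := by
    intro ξ h
    have h2 := mem_sphere_zero_iff_norm.1 ξ.2
    rw [h, norm_zero] at h2
    norm_num at h2
  have hIpos : ∀ ξ : Metric.sphere (0 : Ee n) 1,
      0 < ∫ y, |⟪gradient f y, (ξ : Ee n)⟫| ^ p :=
    fun ξ => integral_pos_of_ne hf hsupp hne hp (hξne ξ)
  have hdpos : ∀ ξ : Metric.sphere (0 : Ee n) 1, 0 < dirDerivLpNorm n p f ξ :=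
    fun ξ => Real.rpow_pos_of_pos (hIpos ξ) _
  have hcpos : ∀ ξ, 0 < c ξ := fun ξ => Real.rpow_pos_of_pos (hdpos ξ) _
  have hccont : Continuous c := by
    rw [continuous_iff_continuousAt]
    intro ξ₀
    have h1 : ContinuousAt (fun ξ : Ee n => dirDerivLpNorm n p f ξ ^ (-(n + p : ℝ))) ξ₀.1 := by
      have h2 : ContinuousAt (fun ξ : Ee n => dirDerivLpNorm n p f ξ) ξ₀.1 := by
        have hI := I_continuousAt hf hsupp hp ξ₀.1
        exact hI.rpow_const (Or.inr (by positivity))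
      exact h2.rpow_const (Or.inl (ne_of_gt (hdpos ξ₀)))
    exact h1.comp continuous_subtype_val.continuousAt
  have hΦcont : ∀ x, Continuous (Φ x) := by
    intro x
    apply hccont.mul
    exact (Continuous.inner continuous_const continuous_subtype_val).abs.rpow_const
      fun ξ => Or.inr (by positivity)
  have hΦint : ∀ x, Integrable (Φ x) μ := by
    intro x
    apply (hΦcont x).integrable_of_hasCompactSupport
    exact IsCompact.of_isClosed_subset isCompact_univ (isClosed_tsupport _) (subset_univ _)
  constructor
  · exact convex_univ
  intro x _ y _ hxy a b ha hb hab
  simp only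
  have hinner : ∀ ξ : Metric.sphere (0 : Ee n) 1,
      ⟪a • x + b • y, (ξ : Ee n)⟫ = a * ⟪x, (ξ : Ee n)⟫ + b * ⟪y, (ξ : Ee n)⟫ := by
    intro ξ
    rw [inner_add_left, real_inner_smul_left, real_inner_smul_left]
  set g : Metric.sphere (0 : Ee n) 1 → ℝ :=
    fun ξ => a * Φ x ξ + b * Φ y ξ - Φ (a • x + b • y) ξ with hg
  have hgint : Integrable g μ :=
    (((hΦint x).const_mul a).add ((hΦint y).const_mul b)).sub (hΦint _)
  have hgnonneg : ∀ ξ, 0 ≤ g ξ := by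
    intro ξ
    have key : |⟪a • x + b • y, (ξ : Ee n)⟫| ^ p
        ≤ a * |⟪x, (ξ : Ee n)⟫| ^ p + b * |⟪y, (ξ : Ee n)⟫| ^ p := by
      rw [hinner ξ]
      exact abs_combo_rpow_le ha hb hab hp
    have := hcpos ξ
    simp only [hg, hΦ]
    nlinarith
  have hZ : μ {ξ : Metric.sphere (0 : Ee n) 1 | ⟪x - y, (ξ : Ee n)⟫ = 0} = 0 :=
    sphere_hyperplane_null (sub_ne_zero.2 hxy)
  have hsupport : {ξ : Metric.sphere (0 : Ee n) 1 | ⟪x - y, (ξ : Ee n)⟫ ≠ 0}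
      ⊆ Function.support g := by
    intro ξ hξ
    simp only [Set.mem_setOf_eq, inner_sub_left] at hξ
    have huv : ⟪x, (ξ : Ee n)⟫ ≠ ⟪y, (ξ : Ee n)⟫ := fun h => hξ (by rw [h]; ring)
    have key : |⟪a • x + b • y, (ξ : Ee n)⟫| ^ p
        < a * |⟪x, (ξ : Ee n)⟫| ^ p + b * |⟪y, (ξ : Ee n)⟫| ^ p := by
      rw [hinner ξ]
      exact abs_combo_rpow_lt ha hb hab hp huv
    have hcξ := hcpos ξ
    simp only [Function.mem_support, hg, hΦ]
    intro h0
    nlinarith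
  have hμsupp : 0 < μ (Function.support g) := by
    have huniv : (Set.univ : Set (Metric.sphere (0 : Ee n) 1))
        ⊆ Function.support g ∪ {ξ | ⟪x - y, (ξ : Ee n)⟫ = 0} := by
      intro ξ _
      by_cases h : ⟪x - y, (ξ : Ee n)⟫ = 0
      · exact Or.inr h
      · exact Or.inl (hsupport h)
    have h1 : μ Set.univ ≤ μ (Function.support g) + μ {ξ | ⟪x - y, (ξ : Ee n)⟫ = 0} :=
      (measure_mono huniv).trans (measure_union_le _ _)
    rw [hZ, add_zero] at h1
    exact lt_of_lt_of_le (sphere_univ_pos hn) h1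
  have hgpos : 0 < ∫ ξ, g ξ ∂μ :=
    (integral_pos_iff_support_of_nonneg hgnonneg hgint).2 hμsupp
  have hsplit : ∫ ξ, g ξ ∂μ
      = a * ∫ ξ, Φ x ξ ∂μ + b * ∫ ξ, Φ y ξ ∂μ - ∫ ξ, Φ (a • x + b • y) ξ ∂μ := by
    have hint1 : Integrable (fun ξ => a * Φ x ξ + b * Φ y ξ) μ :=
      ((hΦint x).const_mul a).add ((hΦint y).const_mul b)
    rw [hg]
    rw [integral_sub hint1 (hΦint _)]
    rw [integral_add ((hΦint x).const_mul a) ((hΦint y).const_mul b),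
      integral_const_mul, integral_const_mul]
  rw [hsplit] at hgpos
  simp only [smul_eq_mul]
  linarith
end
end

section
/- Let f : ℝⁿ → ℝ be a nonzero smooth function with compact support, p > 1, and define C_f*(x) = ∫_{S^{n-1}} ‖∇_ξ f‖_p^{-(n+p)} |⟨x, ξ⟩|^p dξ and L_f = {ξ ∈ ℝⁿ : ‖∇_ξ f‖_p ≤ 1} (where ‖∇_ξ f‖_p is extended 1-homogeneously in ξ). Then ∫_{ℝⁿ} C_f*(∇f(x)) dx = ∫_{S^{n-1}} ‖∇_ξ f‖_p^{-n} dξ = n · vol(L_f). -/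
open MeasureTheory Real
open scoped RealInnerProductSpace
open Metric Set
open scoped ENNReal

noncomputable section

/-- `C_f*(x) = ∫_{S^{n-1}} ‖∇_ξ f‖_p^{-(n+p)} |⟨x, ξ⟩|^p dξ`. -/
def Cfstar (n : ℕ) (p : ℝ) (f : EuclideanSpace ℝ (Fin n) → ℝ)
    (x : EuclideanSpace ℝ (Fin n)) : ℝ :=
  ∫ ξ : Metric.sphere (0 : EuclideanSpace ℝ (Fin n)) 1,
    dirDerivLpNorm n p f ξ ^ (-(n + p : ℝ)) * |⟪x, (ξ : EuclideanSpace ℝ (Fin n))⟫| ^ p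
      ∂(volume : Measure (EuclideanSpace ℝ (Fin n))).toSphere

section aux

variable {n : ℕ} {p : ℝ} {f : EuclideanSpace ℝ (Fin n) → ℝ}

local notation "E" => EuclideanSpace ℝ (Fin n)

lemma grad_inner (f : E → ℝ) (y ξ : E) : ⟪gradient f y, ξ⟫ = fderiv ℝ f y ξ := by
  rw [gradient, InnerProductSpace.toDual_symm_apply]

lemma contGrad (hf : ContDiff ℝ (⊤ : ℕ∞) f) : Continuous (gradient f) :=
  ((InnerProductSpace.toDual ℝ E).symm.continuous.comp (hf.continuous_fderiv (by simp)) : _)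

lemma suppGrad (hsupp : HasCompactSupport f) : HasCompactSupport (gradient f) :=
  (hsupp.fderiv ℝ).comp_left (g := (InnerProductSpace.toDual ℝ E).symm) (by simp)

/-- `I ξ = ∫ |⟪∇f y, ξ⟫|^p dy`. -/
def dirI (p : ℝ) (f : E → ℝ) (ξ : E) : ℝ := ∫ y, |⟪gradient f y, ξ⟫| ^ p

lemma integrable_dirI (hf : ContDiff ℝ (⊤ : ℕ∞) f) (hsupp : HasCompactSupport f) (hp : 0 < p)
    (ξ : E) : Integrable (fun y => |⟪gradient f y, ξ⟫| ^ p) := by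
  have hc : Continuous fun y => |⟪gradient f y, ξ⟫| ^ p := by
    apply Continuous.rpow_const
    · exact (continuous_abs.comp ((contGrad hf).inner continuous_const))
    · exact fun _ => Or.inr hp.le
  have hcs : HasCompactSupport fun y => |⟪gradient f y, ξ⟫| ^ p := by
    apply (suppGrad hsupp).comp_left (g := fun v : E => |⟪v, ξ⟫| ^ p)
    simp [Real.zero_rpow hp.ne']
  exact hc.integrable_of_hasCompactSupport hcs

lemma dirI_nonneg (ξ : E) : 0 ≤ dirI p f ξ :=
  integral_nonneg fun y => Real.rpow_nonneg (abs_nonneg _) _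

lemma dirI_cont (hf : ContDiff ℝ (⊤ : ℕ∞) f) (hsupp : HasCompactSupport f) (hp : 0 < p) :
    Continuous (dirI p f) := by
  rw [continuous_iff_continuousAt]
  intro ξ₀
  apply continuousAt_of_dominated (bound := fun y => (‖gradient f y‖ * (‖ξ₀‖ + 1)) ^ p)
  · filter_upwards with ξ
    exact (integrable_dirI hf hsupp hp ξ).aestronglyMeasurable
  · filter_upwards [Metric.ball_mem_nhds ξ₀ one_pos] with ξ hξ
    filter_upwards with y
    rw [Real.norm_eq_abs, abs_of_nonneg (Real.rpow_nonneg (abs_nonneg _) _)]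
    apply Real.rpow_le_rpow (abs_nonneg _) _ hp.le
    calc |⟪gradient f y, ξ⟫| ≤ ‖gradient f y‖ * ‖ξ‖ := abs_real_inner_le_norm _ _
      _ ≤ ‖gradient f y‖ * (‖ξ₀‖ + 1) := by
          apply mul_le_mul_of_nonneg_left _ (norm_nonneg _)
          have := mem_ball_iff_norm.1 hξ
          have h2 := norm_sub_norm_le ξ ξ₀
          linarith
  · have hc : Continuous fun y => (‖gradient f y‖ * (‖ξ₀‖ + 1)) ^ p := by
      apply Continuous.rpow_const ((contGrad hf).norm.mul continuous_const)
      exact fun _ => Or.inr hp.le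
    apply hc.integrable_of_hasCompactSupport
    apply (suppGrad hsupp).comp_left (g := fun v : E => (‖v‖ * (‖ξ₀‖ + 1)) ^ p)
    simp [Real.zero_rpow hp.ne']
  · filter_upwards with y
    apply ContinuousAt.rpow_const
    · exact (continuous_abs.comp (continuous_const.inner continuous_id)).continuousAt
    · exact Or.inr hp.le

lemma dirI_pos (hf : ContDiff ℝ (⊤ : ℕ∞) f) (hsupp : HasCompactSupport f) (hne : f ≠ 0)
    (hp : 0 < p) {ξ : E} (hξ : ξ ≠ 0) : 0 < dirI p f ξ := by
  have hfd : Differentiable ℝ f := hf.differentiable (by simp)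
  have hex : ∃ y, ⟪gradient f y, ξ⟫ ≠ 0 := by
    by_contra h
    push_neg at h
    apply hne
    funext x
    have hline : ∀ t : ℝ, HasDerivAt (fun t : ℝ => f (x + t • ξ)) 0 t := by
      intro t
      have h1 : HasDerivAt (fun t : ℝ => x + t • ξ) ξ t := by
        simpa using ((hasDerivAt_id t).smul_const ξ).const_add x
      have h2 := (hfd (x + t • ξ)).hasFDerivAt.comp_hasDerivAt t h1
      have h3 : fderiv ℝ f (x + t • ξ) ξ = 0 := by rw [← grad_inner]; exact h _
      rw [h3] at h2
      exact h2
    have hconst : ∀ a b : ℝ, f (x + a • ξ) = f (x + b • ξ) := by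
      intro a b
      exact is_const_of_deriv_eq_zero (fun t => (hline t).differentiableAt)
        (fun t => (hline t).deriv) a b
    obtain ⟨R, hR⟩ := hsupp.isBounded.subset_closedBall 0
    set t : ℝ := (|R| + ‖x‖ + 1) / ‖ξ‖ with ht
    have hξn : (0:ℝ) < ‖ξ‖ := norm_pos_iff.2 hξ
    have htn : ‖t • ξ‖ = |R| + ‖x‖ + 1 := by
      rw [norm_smul, Real.norm_eq_abs, ht, abs_of_nonneg (by positivity)]
      field_simp
    have hout : x + t • ξ ∉ tsupport f := by
      intro hmem
      have := hR hmem
      rw [mem_closedBall_zero_iff] at this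
      have h4 : ‖t • ξ‖ ≤ ‖x + t • ξ‖ + ‖x‖ := by
        calc ‖t • ξ‖ = ‖(x + t • ξ) - x‖ := by congr 1; abel
          _ ≤ ‖x + t • ξ‖ + ‖x‖ := norm_sub_le _ _
      have h5 : R ≤ |R| := le_abs_self R
      linarith
    have h0 : f x = f (x + t • ξ) := by
      have := hconst 0 t
      simpa using this
    rw [h0, image_eq_zero_of_notMem_tsupport hout]
    rfl
  obtain ⟨y₀, hy₀⟩ := hex
  rw [dirI]
  rw [integral_pos_iff_support_of_nonneg (fun y => Real.rpow_nonneg (abs_nonneg _) _)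
    (integrable_dirI hf hsupp hp ξ)]
  have hopen : IsOpen (Function.support fun y => |⟪gradient f y, ξ⟫| ^ p) := by
    have hc : Continuous fun y => |⟪gradient f y, ξ⟫| ^ p := by
      apply Continuous.rpow_const
        (continuous_abs.comp ((contGrad hf).inner continuous_const))
      exact fun _ => Or.inr hp.le
    exact hc.isOpen_support
  refine hopen.measure_pos volume ⟨y₀, ?_⟩
  simp only [Function.mem_support]
  positivity

lemma rho_def (ξ : E) : dirDerivLpNorm n p f ξ = dirI p f ξ ^ (1/p) := rfl

lemma rho_nonneg (ξ : E) : 0 ≤ dirDerivLpNorm n p f ξ :=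
  Real.rpow_nonneg (dirI_nonneg ξ) _

lemma rho_pos (hf : ContDiff ℝ (⊤ : ℕ∞) f) (hsupp : HasCompactSupport f) (hne : f ≠ 0)
    (hp : 0 < p) {ξ : E} (hξ : ξ ≠ 0) : 0 < dirDerivLpNorm n p f ξ :=
  Real.rpow_pos_of_pos (dirI_pos hf hsupp hne hp hξ) _

lemma rho_cont (hf : ContDiff ℝ (⊤ : ℕ∞) f) (hsupp : HasCompactSupport f) (hp : 0 < p) :
    Continuous (dirDerivLpNorm n p f) :=
  (dirI_cont hf hsupp hp).rpow_const fun _ => Or.inr (by positivity)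

lemma rho_rpow (hp : 0 < p) (ξ : E) : dirDerivLpNorm n p f ξ ^ p = dirI p f ξ := by
  rw [rho_def, ← Real.rpow_mul (dirI_nonneg ξ), one_div, inv_mul_cancel₀ hp.ne', Real.rpow_one]

lemma rho_smul (hp : 0 < p) {r : ℝ} (hr : 0 ≤ r) (ξ : E) :
    dirDerivLpNorm n p f (r • ξ) = r * dirDerivLpNorm n p f ξ := by
  have h1 : dirI p f (r • ξ) = r ^ p * dirI p f ξ := by
    rw [dirI, dirI, ← integral_const_mul]
    congr 1; funext y
    rw [real_inner_smul_right, abs_mul, Real.mul_rpow (abs_nonneg _) (abs_nonneg _),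
      abs_of_nonneg hr]
  rw [rho_def, rho_def, h1, Real.mul_rpow (Real.rpow_nonneg hr _) (dirI_nonneg ξ),
    ← Real.rpow_mul hr, mul_one_div_cancel hp.ne', Real.rpow_one]

lemma volumeIoiPow_Iic (m : ℕ) (x : Ioi (0:ℝ)) :
    Measure.volumeIoiPow m (Iic x) = ENNReal.ofReal (x.1 ^ (m+1) / (m+1)) := by
  have hs : Measure.volumeIoiPow m {x} = 0 := by
    rw [Measure.volumeIoiPow, withDensity_apply _ (measurableSet_singleton x)]
    apply setLIntegral_measure_zero
    rw [comap_subtype_coe_apply measurableSet_Ioi]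
    simp
  rw [← Measure.volumeIoiPow_apply_Iio m x, ← Iio_union_right,
    measure_union (by simp) (measurableSet_singleton x), hs, add_zero]

end aux

/-- `∫_{ℝⁿ} C_f*(∇f(x)) dx = ∫_{S^{n-1}} ‖∇_ξ f‖_p^{-n} dξ = n · vol(L_f)`. -/
theorem integral_Cfstar_grad (n : ℕ) (hn : 1 ≤ n) (p : ℝ) (hp : 1 < p)
    (f : EuclideanSpace ℝ (Fin n) → ℝ) (hf : ContDiff ℝ (⊤ : ℕ∞) f)
    (hsupp : HasCompactSupport f) (hne : f ≠ 0) :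
    (∫ x, Cfstar n p f (gradient f x)) =
      (∫ ξ : Metric.sphere (0 : EuclideanSpace ℝ (Fin n)) 1,
        dirDerivLpNorm n p f ξ ^ (-(n : ℝ))
          ∂(volume : Measure (EuclideanSpace ℝ (Fin n))).toSphere) ∧
    (∫ ξ : Metric.sphere (0 : EuclideanSpace ℝ (Fin n)) 1,
        dirDerivLpNorm n p f ξ ^ (-(n : ℝ))
          ∂(volume : Measure (EuclideanSpace ℝ (Fin n))).toSphere) =
      n * (volume {ξ : EuclideanSpace ℝ (Fin n) | dirDerivLpNorm n p f ξ ≤ 1}).toReal := by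
  have hp0 : (0:ℝ) < p := lt_trans one_pos hp
  set ρ : (EuclideanSpace ℝ (Fin n)) → ℝ := dirDerivLpNorm n p f with hρdef
  set ν := (volume : Measure (EuclideanSpace ℝ (Fin n))).toSphere with hνdef
  haveI : Nonempty (Fin n) := ⟨⟨0, hn⟩⟩
  haveI : Nontrivial (EuclideanSpace ℝ (Fin n)) := by
    apply Module.nontrivial_of_finrank_pos (R := ℝ)
    rw [finrank_euclideanSpace_fin]
    omega
  haveI : CompactSpace (Metric.sphere (0:(EuclideanSpace ℝ (Fin n))) 1) :=
    isCompact_iff_compactSpace.mp (isCompact_sphere (0:(EuclideanSpace ℝ (Fin n))) 1)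
  have hρc : Continuous ρ := rho_cont hf hsupp hp0
  have hρnn : ∀ ξ : (EuclideanSpace ℝ (Fin n)), 0 ≤ ρ ξ := fun ξ => rho_nonneg ξ
  have hρpos : ∀ θ : Metric.sphere (0:(EuclideanSpace ℝ (Fin n))) 1, 0 < ρ (θ : (EuclideanSpace ℝ (Fin n))) := fun θ =>
    rho_pos hf hsupp hne hp0 (ne_of_mem_sphere θ.2 one_ne_zero)
  set q : Metric.sphere (0:(EuclideanSpace ℝ (Fin n))) 1 → ℝ := fun θ => ρ (θ : (EuclideanSpace ℝ (Fin n))) ^ (-(n:ℝ)) with hqdef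
  have hqc : Continuous q := by
    apply (hρc.comp continuous_subtype_val).rpow_const
    exact fun θ => Or.inl (hρpos θ).ne'
  have hqnn : ∀ θ, 0 ≤ q θ := fun θ => Real.rpow_nonneg (hρnn _) _
  set c : Metric.sphere (0:(EuclideanSpace ℝ (Fin n))) 1 → ℝ := fun θ => ρ (θ : (EuclideanSpace ℝ (Fin n))) ^ (-(n+p:ℝ)) with hcdef
  have hcc : Continuous c := by
    apply (hρc.comp continuous_subtype_val).rpow_const
    exact fun θ => Or.inl (hρpos θ).ne'
  have hcnn : ∀ θ, 0 ≤ c θ := fun θ => Real.rpow_nonneg (hρnn _) _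
  -- bound on q
  obtain ⟨M, hM⟩ : ∃ M, ∀ θ, q θ ≤ M := by
    obtain ⟨M, hM⟩ := isCompact_univ.exists_bound_of_continuousOn hqc.continuousOn
    exact ⟨M, fun θ => (le_abs_self _).trans (hM θ (mem_univ θ))⟩
  -- the ENNReal product kernel
  set K : (EuclideanSpace ℝ (Fin n)) × Metric.sphere (0:(EuclideanSpace ℝ (Fin n))) 1 → ℝ≥0∞ :=
    fun z => ENNReal.ofReal (c z.2 * |⟪gradient f z.1, (z.2 : (EuclideanSpace ℝ (Fin n)))⟫| ^ p) with hKdef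
  have hKc : Continuous fun z : (EuclideanSpace ℝ (Fin n)) × Metric.sphere (0:(EuclideanSpace ℝ (Fin n))) 1 =>
      c z.2 * |⟪gradient f z.1, (z.2 : (EuclideanSpace ℝ (Fin n)))⟫| ^ p := by
    apply (hcc.comp continuous_snd).mul
    apply Continuous.rpow_const _ (fun _ => Or.inr hp0.le)
    exact continuous_abs.comp (((contGrad hf).comp continuous_fst).inner
      (continuous_subtype_val.comp continuous_snd))
  have hKm : Measurable K := ENNReal.continuous_ofReal.measurable.comp hKc.measurable
  have key1 : ∀ θ : Metric.sphere (0:(EuclideanSpace ℝ (Fin n))) 1,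
      (∫⁻ x, K (x, θ) ∂volume) = ENNReal.ofReal (q θ) := by
    intro θ
    have hint := integrable_dirI hf hsupp hp0 (θ : (EuclideanSpace ℝ (Fin n)))
    simp only [hKdef]
    rw [lintegral_congr (fun x => ENNReal.ofReal_mul (hcnn θ)),
      lintegral_const_mul' _ _ ENNReal.ofReal_ne_top,
      ← ofReal_integral_eq_lintegral_ofReal hint
        (Filter.Eventually.of_forall fun y => Real.rpow_nonneg (abs_nonneg _) _),
      ← ENNReal.ofReal_mul (hcnn θ)]
    congr 1
    have h2 : (∫ y, |⟪gradient f y, (θ:(EuclideanSpace ℝ (Fin n)))⟫| ^ p) = dirI p f (θ:(EuclideanSpace ℝ (Fin n))) := rfl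
    rw [h2, ← rho_rpow hp0 (θ:(EuclideanSpace ℝ (Fin n))), hcdef]
    rw [← Real.rpow_add (hρpos θ)]
    norm_num
    show _ = ρ (θ : (EuclideanSpace ℝ (Fin n))) ^ (-(n:ℝ))
    rw [Real.rpow_neg (hρnn _), Real.rpow_natCast]
  have hswap : (∫⁻ x, ∫⁻ θ, K (x, θ) ∂ν ∂volume) = ∫⁻ θ, ∫⁻ x, K (x, θ) ∂volume ∂ν := by
    exact lintegral_lintegral_swap (μ := (volume : Measure (EuclideanSpace ℝ (Fin n)))) (ν := ν)
      (f := fun x θ => K (x, θ)) hKm.aemeasurable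
  have hAfin : (∫⁻ θ, ENNReal.ofReal (q θ) ∂ν) < ⊤ := by
    calc (∫⁻ θ, ENNReal.ofReal (q θ) ∂ν) ≤ ∫⁻ _, ENNReal.ofReal M ∂ν :=
          lintegral_mono fun θ => ENNReal.ofReal_le_ofReal (hM θ)
      _ = ENNReal.ofReal M * ν univ := by rw [lintegral_const]
      _ < ⊤ := ENNReal.mul_lt_top ENNReal.ofReal_lt_top (measure_lt_top ν univ)
  have hGmeas : Measurable fun x : (EuclideanSpace ℝ (Fin n)) => ∫⁻ θ, K (x, θ) ∂ν := by
    exact Measurable.lintegral_prod_right (f := fun x θ => K (x, θ)) hKm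
  have hGfin : (∫⁻ x, ∫⁻ θ, K (x, θ) ∂ν ∂volume) ≠ ⊤ := by
    rw [hswap]
    rw [lintegral_congr key1]
    exact hAfin.ne
  have hCf : ∀ x : (EuclideanSpace ℝ (Fin n)), Cfstar n p f (gradient f x) = (∫⁻ θ, K (x, θ) ∂ν).toReal := by
    intro x
    have hmeas : AEStronglyMeasurable
        (fun θ : Metric.sphere (0:(EuclideanSpace ℝ (Fin n))) 1 => c θ * |⟪gradient f x, (θ:(EuclideanSpace ℝ (Fin n)))⟫| ^ p) ν := by
      exact (hKc.comp (Continuous.prodMk_right x)).aestronglyMeasurable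
    simp only [Cfstar]
    rw [integral_eq_lintegral_of_nonneg_ae
      (Filter.Eventually.of_forall fun θ =>
        mul_nonneg (Real.rpow_nonneg (hρnn _) _) (Real.rpow_nonneg (abs_nonneg _) _)) hmeas]
  have partA : (∫ x, Cfstar n p f (gradient f x)) = ∫ θ, q θ ∂ν := by
    calc (∫ x, Cfstar n p f (gradient f x))
        = ∫ x, (∫⁻ θ, K (x, θ) ∂ν).toReal := by
          exact integral_congr_ae (Filter.Eventually.of_forall hCf)
      _ = (∫⁻ x, ∫⁻ θ, K (x, θ) ∂ν ∂volume).toReal := by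
          apply integral_toReal hGmeas.aemeasurable
          exact ae_lt_top hGmeas hGfin
      _ = (∫⁻ θ, ENNReal.ofReal (q θ) ∂ν).toReal := by rw [hswap, lintegral_congr key1]
      _ = ∫ θ, q θ ∂ν := by
          rw [integral_eq_lintegral_of_nonneg_ae (Filter.Eventually.of_forall hqnn)
            (hqc.aestronglyMeasurable)]
  refine ⟨partA, ?_⟩
  -- Part B
  have hdim : Module.finrank ℝ (EuclideanSpace ℝ (Fin n)) = n := finrank_euclideanSpace_fin
  set L : Set (EuclideanSpace ℝ (Fin n)) := {ξ | ρ ξ ≤ 1} with hLdef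
  set Φ := homeomorphUnitSphereProd (EuclideanSpace ℝ (Fin n)) with hΦdef
  set T : Set (Metric.sphere (0:(EuclideanSpace ℝ (Fin n))) 1 × Ioi (0:ℝ)) :=
    {a | (a.2 : ℝ) * ρ (a.1 : EuclideanSpace ℝ (Fin n)) ≤ 1} with hTdef
  have hTc : Continuous fun a : Metric.sphere (0:(EuclideanSpace ℝ (Fin n))) 1 × Ioi (0:ℝ) =>
      (a.2 : ℝ) * ρ (a.1 : EuclideanSpace ℝ (Fin n)) :=
    (continuous_subtype_val.comp continuous_snd).mul
      (hρc.comp (continuous_subtype_val.comp continuous_fst))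
  have hTmeas : MeasurableSet T := (isClosed_le hTc continuous_const).measurableSet
  have hpre : Φ ⁻¹' T = ((↑) : ({0}ᶜ : Set (EuclideanSpace ℝ (Fin n))) → _) ⁻¹' L := by
    ext x
    have hx0 : (x : EuclideanSpace ℝ (Fin n)) ≠ 0 := x.2
    have hsm : ‖(x:EuclideanSpace ℝ (Fin n))‖ *
        ρ (‖(x:EuclideanSpace ℝ (Fin n))‖⁻¹ • (x:EuclideanSpace ℝ (Fin n)))
        = ρ (x : EuclideanSpace ℝ (Fin n)) := by
      rw [hρdef, ← rho_smul hp0 (norm_nonneg _), smul_inv_smul₀ (norm_ne_zero_iff.2 hx0)]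
    simp only [mem_preimage, hTdef, mem_setOf_eq, hΦdef,
      homeomorphUnitSphereProd_apply_fst_coe, homeomorphUnitSphereProd_apply_snd_coe, hLdef]
    rw [hsm]
  have hmp :=
    (volume : Measure (EuclideanSpace ℝ (Fin n))).measurePreserving_homeomorphUnitSphereProd
  have h1 : (volume.comap Subtype.val : Measure ({0}ᶜ : Set (EuclideanSpace ℝ (Fin n))))
        (Φ ⁻¹' T)
      = (ν.prod
          (Measure.volumeIoiPow (Module.finrank ℝ (EuclideanSpace ℝ (Fin n)) - 1))) T :=
    hmp.measure_preimage hTmeas.nullMeasurableSet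
  have h2 : (volume.comap Subtype.val : Measure ({0}ᶜ : Set (EuclideanSpace ℝ (Fin n))))
      (((↑) : ({0}ᶜ : Set (EuclideanSpace ℝ (Fin n))) → _) ⁻¹' L) = volume L := by
    rw [comap_subtype_coe_apply (measurableSet_singleton (0:EuclideanSpace ℝ (Fin n))).compl,
      Subtype.image_preimage_coe]
    rw [inter_comm, ← diff_eq, measure_diff_null (measure_singleton _)]
  have hslice : ∀ θ : Metric.sphere (0:EuclideanSpace ℝ (Fin n)) 1,
      (Prod.mk θ ⁻¹' T) =
        Iic (⟨(ρ (θ:EuclideanSpace ℝ (Fin n)))⁻¹, mem_Ioi.2 (inv_pos.2 (hρpos θ))⟩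
          : Ioi (0:ℝ)) := by
    intro θ
    ext r
    simp only [hTdef, mem_preimage, mem_setOf_eq, mem_Iic, ← Subtype.coe_le_coe]
    rw [show (ρ (θ:EuclideanSpace ℝ (Fin n)))⁻¹ = 1 / ρ (θ:EuclideanSpace ℝ (Fin n)) by
      rw [one_div], le_div_iff₀ (hρpos θ)]
  have hsl2 : ∀ θ : Metric.sphere (0:EuclideanSpace ℝ (Fin n)) 1,
      (Measure.volumeIoiPow (Module.finrank ℝ (EuclideanSpace ℝ (Fin n)) - 1))
        (Prod.mk θ ⁻¹' T) = ENNReal.ofReal (q θ) * ENNReal.ofReal ((n:ℝ)⁻¹) := by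
    intro θ
    rw [hslice θ, volumeIoiPow_Iic]
    have hn1 : Module.finrank ℝ (EuclideanSpace ℝ (Fin n)) - 1 + 1 = n := by
      rw [hdim]; omega
    rw [hn1, ← ENNReal.ofReal_mul (hqnn θ)]
    congr 1
    have hqθ : ((ρ (θ:EuclideanSpace ℝ (Fin n)))⁻¹) ^ n = q θ := by
      rw [hqdef]
      rw [inv_pow, ← Real.rpow_natCast (ρ (θ:EuclideanSpace ℝ (Fin n))) n,
        ← Real.rpow_neg (hρnn _)]
    rw [hqθ, div_eq_mul_inv,
      show ((Module.finrank ℝ (EuclideanSpace ℝ (Fin n)) - 1 : ℕ) : ℝ) + 1 = (n:ℝ) by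
        rw [hdim, Nat.cast_sub hn]; push_cast; ring]
  have hvol : volume L = (∫⁻ θ, ENNReal.ofReal (q θ) ∂ν) * ENNReal.ofReal ((n:ℝ)⁻¹) := by
    rw [← h2, ← hpre, h1, Measure.prod_apply hTmeas, lintegral_congr hsl2,
      lintegral_mul_const' _ _ ENNReal.ofReal_ne_top]
  rw [integral_eq_lintegral_of_nonneg_ae (Filter.Eventually.of_forall hqnn)
    hqc.aestronglyMeasurable, hvol, ENNReal.toReal_mul,
    ENNReal.toReal_ofReal (by positivity)]
  have hn0 : (0:ℝ) < n := by exact_mod_cast hn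
  field_simp
end
end
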